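/- arXiv:2602.03626 — 3 statements merged into one kernel-verified Lean document; each statement's English description precedes it below -/
import Mathlib

section
/- Let $r > 0$ and set $R = ar + b$ with $a > 0$ and $0 < b \leq 1$. Then $\frac{1}{\pi R}\int_{-\pi/2}^{\pi/2} \cos\theta \cdot \log\left(1 + \frac{1}{b\cos\theta}\right) d\theta \leq \frac{1}{\pi R}\left(\frac{\pi}{b} - 4\sqrt{b^{-2}-1}\,\arctan\sqrt{\frac{b^{-1}-1}{b^{-1}+1}} - 2\log(2b)\right)$, where the integral is interpreted as an improper integral (the integrand extends continuously by $0$ at $\theta = \pm\pi/2$ since $\cos\theta \log(1/\cos\theta) \to 0$). -/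
open Real Set intervalIntegral

/-!
On `(-π/2, π/2)` the integrand is `cos θ (log (1 + b cos θ) - log b - log cos θ)`, which extends
continuously to the closed interval. It has an explicit primitive: `θ / b - 2 √(b⁻² - 1) arctan (…)`
accounts, via the Weierstrass substitution, for the rational function `(b + cos θ) / (1 + b cos θ)`
left over when `sin θ (log (1 + b cos θ) - log b)` is differentiated, and
`((1 + sin θ) log (1 + sin θ) - (1 - sin θ) log (1 - sin θ)) / 2` is a primitive of
`cos θ (log cos θ + 1)`. The primitive is odd and continuous up to `± π / 2`, so the fundamental
theorem of calculus evaluates the integral exactly, and the claimed bound holds with equality.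
-/

lemma mul_log_one_add_inv_mul {b y : ℝ} (hb : 0 < b) (hy : 0 ≤ y) :
    y * log (1 + 1 / (b * y)) = y * log (1 + b * y) - y * log b - y * log y := by
  rcases hy.eq_or_lt with rfl | hy
  · simp
  have h : 1 + 1 / (b * y) = (1 + b * y) / (b * y) := by field_simp; ring
  rw [h, log_div (by positivity) (by positivity), log_mul hb.ne' hy.ne']
  ring

lemma hasDerivAt_arctan_mul_tan_half (k : ℝ) {x : ℝ} (hx : cos (x / 2) ≠ 0) :
    HasDerivAt (fun θ => arctan (k * tan (θ / 2)))
      (k / (2 * (cos (x / 2) ^ 2 + k ^ 2 * sin (x / 2) ^ 2))) x := by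
  have htan : HasDerivAt (fun θ => tan (θ / 2)) (1 / cos (x / 2) ^ 2 * (1 / 2)) x := by
    simpa [Function.comp_def] using (hasDerivAt_tan hx).comp x ((hasDerivAt_id x).div_const 2)
  convert (htan.const_mul k).arctan using 1
  rw [tan_eq_sin_div_cos]
  field_simp

lemma hasDerivAt_half_mul_log_one_add_sin_sub {x : ℝ} (hx : 0 < cos x) :
    HasDerivAt (fun θ => ((1 + sin θ) * log (1 + sin θ) - (1 - sin θ) * log (1 - sin θ)) / 2)
      (cos x * (log (cos x) + 1)) x := by
  have hs : sin x ^ 2 < 1 := by nlinarith [sin_sq_add_cos_sq x]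
  have hp : 0 < 1 + sin x := by nlinarith
  have hm : 0 < 1 - sin x := by nlinarith
  have hplus := (hasDerivAt_mul_log hp.ne').comp x ((hasDerivAt_sin x).const_add 1)
  have hminus := (hasDerivAt_mul_log hm.ne').comp x ((hasDerivAt_sin x).const_sub 1)
  refine ((hplus.sub hminus).div_const 2).congr_deriv ?_
  have hcos : log (cos x) = (log (1 + sin x) + log (1 - sin x)) / 2 := by
    rw [← log_mul hp.ne' hm.ne', show (1 + sin x) * (1 - sin x) = cos x ^ 2 by
      nlinarith [sin_sq_add_cos_sq x], log_pow]
    push_cast; ring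
  rw [hcos]; ring

lemma sqrt_sq_sub_one_mul_sqrt_div {t : ℝ} (ht : 1 ≤ t) :
    √(t ^ 2 - 1) * √((t - 1) / (t + 1)) = t - 1 := by
  rw [← sqrt_mul (by nlinarith), show (t ^ 2 - 1) * ((t - 1) / (t + 1)) = (t - 1) ^ 2 by
    field_simp; ring, sqrt_sq (by linarith)]

/-- The Weierstrass substitution `u = tan (θ / 2)`: with `k² = (1 - b) / (1 + b)`,
`cos² (θ / 2) + k² sin² (θ / 2) = (1 + b cos θ) / (1 + b)`. -/
lemma hasDerivAt_div_sub_arctan_tan_half {b x : ℝ} (hb0 : 0 < b) (hb1 : b ≤ 1)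
    (hx : cos (x / 2) ≠ 0) :
    HasDerivAt (fun θ => θ / b
        - 2 * √(b⁻¹ ^ 2 - 1) * arctan (√((b⁻¹ - 1) / (b⁻¹ + 1)) * tan (θ / 2)))
      ((b + cos x) / (1 + b * cos x)) x := by
  have hinv : 1 ≤ b⁻¹ := (one_le_inv₀ hb0).2 hb1
  set k := √((b⁻¹ - 1) / (b⁻¹ + 1))
  have hck : √(b⁻¹ ^ 2 - 1) * k = b⁻¹ - 1 := sqrt_sq_sub_one_mul_sqrt_div hinv
  have hk : k ^ 2 = (1 - b) / (1 + b) := by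
    rw [sq_sqrt (div_nonneg (by linarith) (by linarith))]
    field_simp
  have hcos : cos x = 2 * cos (x / 2) ^ 2 - 1 := by
    rw [cos_sq, mul_div_cancel₀ x two_ne_zero]; ring
  have hden : cos (x / 2) ^ 2 + k ^ 2 * sin (x / 2) ^ 2 = (1 + b * cos x) / (1 + b) := by
    rw [hk, hcos, sin_sq]; field_simp; ring
  have hpos : 0 < 1 + b * cos x := by
    have : 0 < cos (x / 2) ^ 2 + k ^ 2 * sin (x / 2) ^ 2 := by positivity
    rw [hden] at this
    exact (div_pos_iff_of_pos_right (by linarith)).1 this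
  refine (((hasDerivAt_id x).div_const b).sub
    ((hasDerivAt_arctan_mul_tan_half k hx).const_mul (2 * √(b⁻¹ ^ 2 - 1)))).congr_deriv ?_
  rw [hden, ← mul_div_assoc, mul_assoc, hck]
  field_simp
  ring

/-- On `(-π/2, π/2)` this equals `θ / b - 2 √(b⁻² - 1) arctan (…)
+ log ((1 - tan (θ/2)) / (1 + tan (θ/2))) + sin θ log (1 + 1 / (b cos θ))`, but this form stays
continuous at `θ = ± π / 2`. -/
noncomputable def arcPrimitive (b θ : ℝ) : ℝ :=
  θ / b - 2 * √(b⁻¹ ^ 2 - 1) * arctan (√((b⁻¹ - 1) / (b⁻¹ + 1)) * tan (θ / 2))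
    + sin θ * (log (1 + b * cos θ) - log b)
    - ((1 + sin θ) * log (1 + sin θ) - (1 - sin θ) * log (1 - sin θ)) / 2

lemma arcPrimitive_neg (b θ : ℝ) : arcPrimitive b (-θ) = -arcPrimitive b θ := by
  simp only [arcPrimitive, neg_div, tan_neg, mul_neg, arctan_neg, sin_neg, cos_neg,
    sub_neg_eq_add, ← sub_eq_add_neg]
  ring

lemma arcPrimitive_pi_div_two (b : ℝ) :
    arcPrimitive b (π / 2) = π / (2 * b) - 2 * √(b⁻¹ ^ 2 - 1) *
      arctan (√((b⁻¹ - 1) / (b⁻¹ + 1))) - log b - log 2 := by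
  simp only [arcPrimitive, div_div, show π / (2 * 2) = π / 4 by ring, tan_pi_div_four,
    sin_pi_div_two, cos_pi_div_two]
  norm_num
  ring

lemma hasDerivAt_arcPrimitive {b x : ℝ} (hb0 : 0 < b) (hb1 : b ≤ 1)
    (hx : x ∈ Ioo (-(π / 2)) (π / 2)) :
    HasDerivAt (arcPrimitive b) (cos x * log (1 + 1 / (b * cos x))) x := by
  have hcos : 0 < cos x := cos_pos_of_mem_Ioo hx
  have hhalf : cos (x / 2) ≠ 0 :=
    (cos_pos_of_mem_Ioo ⟨by linarith [hx.1, pi_pos], by linarith [hx.2, pi_pos]⟩).ne'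
  have hpos : 0 < 1 + b * cos x := by positivity
  have hlog : HasDerivAt (fun θ => log (1 + b * cos θ) - log b)
      (-(b * sin x) / (1 + b * cos x)) x := by
    simpa using (((hasDerivAt_cos x).const_mul b).const_add 1).log hpos.ne' |>.sub_const (log b)
  refine (((hasDerivAt_div_sub_arctan_tan_half hb0 hb1 hhalf).add
    ((hasDerivAt_sin x).mul hlog)).sub
    (hasDerivAt_half_mul_log_one_add_sin_sub hcos)).congr_deriv ?_
  rw [mul_log_one_add_inv_mul hb0 hcos.le]
  field_simp
  nlinarith [sin_sq_add_cos_sq x]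

lemma continuousOn_log_one_add_mul_cos {b : ℝ} (hb0 : 0 < b) :
    ContinuousOn (fun θ => log (1 + b * cos θ)) (Icc (-(π / 2)) (π / 2)) :=
  ContinuousOn.log (by fun_prop) fun θ hθ => by
    have := cos_nonneg_of_mem_Icc hθ
    positivity

lemma continuousOn_arcPrimitive {b : ℝ} (hb0 : 0 < b) :
    ContinuousOn (arcPrimitive b) (Icc (-(π / 2)) (π / 2)) := by
  have htan : ContinuousOn (fun θ => tan (θ / 2)) (Icc (-(π / 2)) (π / 2)) :=
    continuousOn_tan.comp (continuous_id.div_const 2).continuousOn fun θ hθ =>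
      (cos_pos_of_mem_Ioo ⟨by linarith [hθ.1, pi_pos], by linarith [hθ.2, pi_pos]⟩).ne'
  unfold arcPrimitive
  refine ContinuousOn.sub (ContinuousOn.add (by fun_prop) ?_) ?_
  · exact continuous_sin.continuousOn.mul
      ((continuousOn_log_one_add_mul_cos hb0).sub continuousOn_const)
  · exact (((continuous_const.add continuous_sin).mul_log).sub
      (continuous_const.sub continuous_sin).mul_log).div_const 2 |>.continuousOn

lemma intervalIntegrable_mul_log_one_add_inv_mul_cos {b : ℝ} (hb0 : 0 < b) :
    IntervalIntegrable (fun θ => cos θ * log (1 + 1 / (b * cos θ))) MeasureTheory.volume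
      (-(π / 2)) (π / 2) := by
  refine ContinuousOn.intervalIntegrable ?_
  rw [uIcc_of_le (by linarith [pi_pos])]
  refine ContinuousOn.congr (f := fun θ => cos θ * log (1 + b * cos θ) - cos θ * log b
    - cos θ * log (cos θ)) ?_ fun θ hθ => mul_log_one_add_inv_mul hb0 (cos_nonneg_of_mem_Icc hθ)
  exact (continuous_cos.continuousOn.mul (continuousOn_log_one_add_mul_cos hb0)).sub
    (by fun_prop) |>.sub continuous_cos.mul_log.continuousOn

theorem integral_cos_mul_log_one_add_inv_mul_cos {b : ℝ} (hb0 : 0 < b) (hb1 : b ≤ 1) :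
    ∫ θ in (-(π / 2))..(π / 2), cos θ * log (1 + 1 / (b * cos θ)) =
      π / b - 4 * √(b⁻¹ ^ 2 - 1) * arctan (√((b⁻¹ - 1) / (b⁻¹ + 1))) - 2 * log (2 * b) := by
  rw [integral_eq_sub_of_hasDerivAt_of_le (by linarith [pi_pos]) (continuousOn_arcPrimitive hb0)
    (fun x hx => hasDerivAt_arcPrimitive hb0 hb1 hx)
    (intervalIntegrable_mul_log_one_add_inv_mul_cos hb0),
    arcPrimitive_neg, arcPrimitive_pi_div_two, log_mul two_ne_zero hb0.ne']
  field_simp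
  ring

open Real in
theorem stmt7_general (b R : ℝ) (hb0 : 0 < b) (hb1 : b ≤ 1) :
    (1 / (π * R)) * ∫ θ in (-(π / 2))..(π / 2), Real.cos θ * Real.log (1 + 1 / (b * Real.cos θ)) ≤
      (1 / (π * R)) * (π / b - 4 * Real.sqrt (b⁻¹ ^ 2 - 1) *
        Real.arctan (Real.sqrt ((b⁻¹ - 1) / (b⁻¹ + 1))) - 2 * Real.log (2 * b)) := by
  rw [integral_cos_mul_log_one_add_inv_mul_cos hb0 hb1]

open Real in
theorem stmt7 (r a b R : ℝ) (hr : r > 0) (ha : a > 0) (hb0 : 0 < b) (hb1 : b ≤ 1)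
    (hR : R = a * r + b) :
    (1 / (π * R)) * ∫ θ in (-(π / 2))..(π / 2), Real.cos θ * Real.log (1 + 1 / (b * Real.cos θ)) ≤
      (1 / (π * R)) * (π / b - 4 * Real.sqrt (b⁻¹ ^ 2 - 1) *
        Real.arctan (Real.sqrt ((b⁻¹ - 1) / (b⁻¹ + 1))) - 2 * Real.log (2 * b)) :=
  stmt7_general b R hb0 hb1
end

section
/- For $0 < b \leq 1$, $\lim_{\theta \to (\pi/2)^-}\left[\log(1 - \tan(\theta/2)) + \sin\theta \cdot \log\left(1 + \frac{1}{b\cos\theta}\right)\right] = \log(b^{-1})$. -/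
open Real Filter

private lemma sq_mul_log_tendsto :
    Filter.Tendsto (fun x : ℝ => x ^ 2 * Real.log x) (nhdsWithin 0 (Set.Ioi 0)) (nhds 0) := by
  have h := tendsto_log_mul_rpow_nhdsGT_zero (r := 2) (by norm_num)
  refine h.congr' ?_
  filter_upwards [self_mem_nhdsWithin] with x hx
  rw [Real.rpow_two]
  ring

private lemma key_eq (b : ℝ) (hb0 : 0 < b) (θ : ℝ) (hθ : θ ∈ Set.Ioo 0 (π / 2)) :
    Real.log (1 - Real.tan (θ / 2)) + Real.sin θ * Real.log (1 + 1 / (b * Real.cos θ)) =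
    (Real.cos (θ / 2) - Real.sin (θ / 2)) ^ 2 *
        Real.log (Real.cos (θ / 2) - Real.sin (θ / 2))
      - Real.log (Real.cos (θ / 2))
      + Real.sin θ *
          (Real.log (1 + b * Real.cos θ) - Real.log (Real.cos (θ / 2) + Real.sin (θ / 2)))
      + Real.sin θ * Real.log b⁻¹ := by
  obtain ⟨hθ0, hθ2⟩ := hθ
  set x := θ / 2 with hx
  have hx0 : 0 < x := by positivity
  have hx4 : x < π / 4 := by rw [hx]; linarith
  have hs : 0 < Real.sin x := Real.sin_pos_of_pos_of_lt_pi hx0 (by linarith [Real.pi_pos])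
  have hc4 : Real.cos (π / 4) < Real.cos x :=
    Real.cos_lt_cos_of_nonneg_of_le_pi (le_of_lt hx0) (by linarith [Real.pi_pos]) hx4
  have hs4 : Real.sin x < Real.sin (π / 4) := by
    apply Real.sin_lt_sin_of_lt_of_le_pi_div_two (by linarith [Real.pi_pos]) (by linarith) hx4
  have hsc : Real.sin x < Real.cos x := by
    have := Real.sin_pi_div_four
    have := Real.cos_pi_div_four
    linarith
  have hc : 0 < Real.cos x := lt_trans hs hsc
  have pyth : Real.sin x ^ 2 + Real.cos x ^ 2 = 1 := Real.sin_sq_add_cos_sq x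
  have hθeq : θ = 2 * x := by rw [hx]; ring
  have hsinθ : Real.sin θ = 2 * Real.sin x * Real.cos x := by
    rw [hθeq, Real.sin_two_mul]
  have hcosθ : Real.cos θ = (Real.cos x - Real.sin x) * (Real.cos x + Real.sin x) := by
    rw [hθeq, Real.cos_two_mul']; ring
  have hcs : 0 < Real.cos x - Real.sin x := by linarith
  have hcps : 0 < Real.cos x + Real.sin x := by linarith
  have hK : 0 < Real.cos θ := by rw [hcosθ]; positivity
  have htan : Real.tan x = Real.sin x / Real.cos x := Real.tan_eq_sin_div_cos x
  have h1 : 1 - Real.tan x = (Real.cos x - Real.sin x) / Real.cos x := by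
    rw [htan]; field_simp
  have hlog1 : Real.log (1 - Real.tan x) =
      Real.log (Real.cos x - Real.sin x) - Real.log (Real.cos x) := by
    rw [h1, Real.log_div hcs.ne' hc.ne']
  have h2 : 1 + 1 / (b * Real.cos θ) = (1 + b * Real.cos θ) / (b * Real.cos θ) := by
    field_simp
    ring
  have hbK : 0 < 1 + b * Real.cos θ := by positivity
  have hlog2 : Real.log (1 + 1 / (b * Real.cos θ)) =
      Real.log (1 + b * Real.cos θ) - Real.log b - Real.log (Real.cos x - Real.sin x)
        - Real.log (Real.cos x + Real.sin x) := by
    rw [h2, Real.log_div hbK.ne' (by positivity), Real.log_mul hb0.ne' hK.ne', hcosθ,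
      Real.log_mul hcs.ne' hcps.ne']
    ring
  have hone : 1 - Real.sin θ = (Real.cos x - Real.sin x) ^ 2 := by
    rw [hsinθ]; nlinarith [pyth]
  rw [hlog1, hlog2, Real.log_inv]
  linear_combination Real.log (Real.cos x - Real.sin x) * hone

open Real in
theorem stmt8 (b : ℝ) (hb0 : 0 < b) (hb1 : b ≤ 1) :
    Filter.Tendsto
      (fun θ : ℝ => Real.log (1 - Real.tan (θ / 2)) +
        Real.sin θ * Real.log (1 + 1 / (b * Real.cos θ)))
      (nhdsWithin (π / 2) (Set.Iio (π / 2))) (nhds (Real.log b⁻¹)) := by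
  have hπ : (0:ℝ) < π := Real.pi_pos
  have hmem : ∀ᶠ θ in nhdsWithin (π / 2) (Set.Iio (π / 2)), θ ∈ Set.Ioo 0 (π / 2) := by
    have h1 : ∀ᶠ θ in nhdsWithin (π / 2) (Set.Iio (π / 2)), θ ∈ Set.Ioi (0:ℝ) := by
      apply eventually_nhdsWithin_of_eventually_nhds
      exact eventually_of_mem (isOpen_Ioi.mem_nhds (show (0:ℝ) < π / 2 by positivity)) fun x hx => hx
    filter_upwards [h1, self_mem_nhdsWithin] with θ h1 h2
    exact ⟨h1, h2⟩
  -- limit of the surrogate function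
  set g : ℝ → ℝ := fun θ =>
    (Real.cos (θ / 2) - Real.sin (θ / 2)) ^ 2 *
        Real.log (Real.cos (θ / 2) - Real.sin (θ / 2))
      - Real.log (Real.cos (θ / 2))
      + Real.sin θ *
          (Real.log (1 + b * Real.cos θ) - Real.log (Real.cos (θ / 2) + Real.sin (θ / 2)))
      + Real.sin θ * Real.log b⁻¹ with hg
  have hgt : Filter.Tendsto g (nhdsWithin (π / 2) (Set.Iio (π / 2))) (nhds (Real.log b⁻¹)) := by
    have hA : Filter.Tendsto (fun θ : ℝ =>
        (Real.cos (θ / 2) - Real.sin (θ / 2)) ^ 2 *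
          Real.log (Real.cos (θ / 2) - Real.sin (θ / 2)))
        (nhdsWithin (π / 2) (Set.Iio (π / 2))) (nhds 0) := by
      apply sq_mul_log_tendsto.comp
      rw [tendsto_nhdsWithin_iff]
      constructor
      · have : Filter.Tendsto (fun θ : ℝ => Real.cos (θ / 2) - Real.sin (θ / 2))
            (nhds (π / 2)) (nhds (Real.cos (π / 2 / 2) - Real.sin (π / 2 / 2))) :=
          ((by fun_prop : Continuous fun θ : ℝ => Real.cos (θ / 2) - Real.sin (θ / 2))).tendsto _
        rw [show π / 2 / 2 = π / 4 by ring, Real.cos_pi_div_four, Real.sin_pi_div_four] at this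
        simpa using this.mono_left (nhdsWithin_le_nhds (s := Set.Iio (π / 2)))
      · filter_upwards [hmem] with θ hθ
        obtain ⟨h0, h2⟩ := hθ
        have hx0 : 0 < θ / 2 := by positivity
        have hx4 : θ / 2 < π / 4 := by linarith
        have hc4 : Real.cos (π / 4) < Real.cos (θ / 2) :=
          Real.cos_lt_cos_of_nonneg_of_le_pi (le_of_lt hx0) (by linarith) hx4
        have hs4 : Real.sin (θ / 2) < Real.sin (π / 4) :=
          Real.sin_lt_sin_of_lt_of_le_pi_div_two (by linarith) (by linarith) hx4
        have := Real.sin_pi_div_four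
        have := Real.cos_pi_div_four
        have : Real.sin (θ / 2) < Real.cos (θ / 2) := by linarith
        simpa using this
    have hB : Filter.Tendsto (fun θ : ℝ => Real.log (Real.cos (θ / 2)))
        (nhdsWithin (π / 2) (Set.Iio (π / 2))) (nhds (Real.log (Real.cos (π / 4)))) := by
      have hcont : ContinuousAt (fun θ : ℝ => Real.log (Real.cos (θ / 2))) (π / 2) := by
        apply ContinuousAt.log (by fun_prop)
        rw [show π / 2 / 2 = π / 4 by ring, Real.cos_pi_div_four]
        positivity
      have := hcont.tendsto.mono_left (nhdsWithin_le_nhds (s := Set.Iio (π / 2)))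
      rwa [show π / 2 / 2 = π / 4 by ring] at this
    have hC : Filter.Tendsto (fun θ : ℝ => Real.sin θ *
        (Real.log (1 + b * Real.cos θ) - Real.log (Real.cos (θ / 2) + Real.sin (θ / 2))))
        (nhdsWithin (π / 2) (Set.Iio (π / 2)))
        (nhds (1 * (Real.log 1 - Real.log (Real.cos (π / 4) + Real.sin (π / 4))))) := by
      have hcont : ContinuousAt (fun θ : ℝ => Real.sin θ *
          (Real.log (1 + b * Real.cos θ) - Real.log (Real.cos (θ / 2) + Real.sin (θ / 2))))
          (π / 2) := by
        apply ContinuousAt.mul (by fun_prop)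
        apply ContinuousAt.sub
        · apply ContinuousAt.log (by fun_prop)
          rw [Real.cos_pi_div_two]
          norm_num
        · apply ContinuousAt.log (by fun_prop)
          rw [show π / 2 / 2 = π / 4 by ring, Real.cos_pi_div_four, Real.sin_pi_div_four]
          positivity
      have := hcont.tendsto.mono_left (nhdsWithin_le_nhds (s := Set.Iio (π / 2)))
      simpa [Real.sin_pi_div_two, Real.cos_pi_div_two, show π / 2 / 2 = π / 4 by ring]
        using this
    have hD : Filter.Tendsto (fun θ : ℝ => Real.sin θ * Real.log b⁻¹)
        (nhdsWithin (π / 2) (Set.Iio (π / 2))) (nhds (1 * Real.log b⁻¹)) := by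
      have hcont : ContinuousAt (fun θ : ℝ => Real.sin θ * Real.log b⁻¹) (π / 2) := by
        fun_prop
      have := hcont.tendsto.mono_left (nhdsWithin_le_nhds (s := Set.Iio (π / 2)))
      simpa [Real.sin_pi_div_two] using this
    have := ((hA.sub hB).add hC).add hD
    have hval : 0 - Real.log (Real.cos (π / 4)) +
        1 * (Real.log 1 - Real.log (Real.cos (π / 4) + Real.sin (π / 4))) + 1 * Real.log b⁻¹
        = Real.log b⁻¹ := by
      rw [Real.cos_pi_div_four, Real.sin_pi_div_four]
      have h2 : Real.sqrt 2 / 2 + Real.sqrt 2 / 2 = Real.sqrt 2 := by ring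
      rw [h2, Real.log_one]
      have hlog : Real.log (Real.sqrt 2 / 2) + Real.log (Real.sqrt 2) = 0 := by
        rw [← Real.log_mul (by positivity) (by positivity)]
        have : Real.sqrt 2 / 2 * Real.sqrt 2 = 1 := by
          have := Real.sq_sqrt (by norm_num : (2:ℝ) ≥ 0)
          nlinarith [Real.sqrt_nonneg 2]
        rw [this, Real.log_one]
      linarith
    rwa [hval] at this
  refine hgt.congr' ?_
  filter_upwards [hmem] with θ hθ
  exact (key_eq b hb0 θ hθ).symm
end

section
/- Let $r > 0$. Then $-\frac{\zeta'}{\zeta}(1+r) \leq \frac{1}{r} - \log(2\pi) + \frac{\gamma}{2} + 1 + \frac{1}{2}\frac{\Gamma'}{\Gamma}\left(\frac{3+r}{2}\right)$, where $\gamma$ is the Euler–Mascheroni constant and $\Gamma$ the Gamma function. -/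
/-!
Let `ξ(s) = s(s-1)/2 · Λ(s)` with `Λ(s) = π^(-s/2) Γ(s/2) ζ(s)`. Since `Λ = Λ₀ - 1/s - 1/(1-s)`,
`ξ = s(s-1)/2 · Λ₀ + 1/2`, and the Mellin representation of `Λ₀` through the theta function,
`Λ₀(x) = ½ ∫_1^∞ (t^(x/2) + t^((1-x)/2)) (θ(t) - 1) dt/t`, shows that `Λ₀` is nonnegative and
increasing on `[1/2, ∞)`: the kernel is `2 t^(1/4) cosh((x/2 - 1/4) log t)`. Hence `ξ` is positive
and increasing on `(1, ∞)`, so its logarithmic derivative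
`1/s + 1/(s-1) - ½ log π + ½ ψ(s/2) + ζ'/ζ(s)` is nonnegative at `s = 1 + r`. The bound follows
from `ψ(s/2 + 1) = ψ(s/2) + 2/s` and `log(4π) < γ + 2`, which is the negativity of the constant `B`
of the explicit formula.
-/

open scoped Real Topology

open Complex Set Filter Asymptotics MeasureTheory HurwitzZeta

namespace WeakFEPair

variable {E : Type*} [NormedAddCommGroup E] [NormedSpace ℂ E] (P : WeakFEPair E)

theorem mellinConvergent_indicator_Ioi_one_sub (s : ℂ) :
    MellinConvergent ((Ioi 1).indicator (P.f · - P.f₀)) s := by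
  refine mellinConvergent_of_isBigO_rpow (a := s.re + 1) (b := s.re - 1) (fun x hx ↦ ?_) ?_
    (by linarith) ?_ (by linarith)
  · obtain ⟨t, ht, hint⟩ := P.hf_int.sub (locallyIntegrableOn_const P.f₀) x hx
    exact ⟨t, ht, hint.indicator measurableSet_Ioi⟩
  · refine (P.hf_top _).congr' ?_ EventuallyEq.rfl
    filter_upwards [eventually_gt_atTop 1] with x hx
    rw [indicator_of_mem (mem_Ioi.mpr hx)]
  · refine (isBigO_zero _ _).congr' ?_ EventuallyEq.rfl
    filter_upwards [Ioo_mem_nhdsGT one_pos] with x hx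
    rw [indicator_of_notMem (notMem_Ioi.mpr hx.2.le)]

theorem f_modif_eqOn : EqOn P.f_modif
    (fun x ↦ (Ioi 1).indicator (P.f · - P.f₀) x +
      (P.ε * (x : ℂ) ^ (-(P.k : ℂ))) • (Ioi 1).indicator (P.g · - P.g₀) x⁻¹) (Ioi 0) := by
  intro x (hx : 0 < x)
  have hpow : ((x ^ (-P.k) : ℝ) : ℂ) = (x : ℂ) ^ (-(P.k : ℂ)) := by
    rw [ofReal_cpow hx.le, ofReal_neg]
  rcases lt_or_ge x 1 with hx1 | hx1
  · have hfeq := P.h_feq x⁻¹ (inv_pos.mpr hx)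
    rw [one_div, inv_inv, Real.inv_rpow hx.le, ← Real.rpow_neg hx.le, hpow] at hfeq
    have hx1' : x ∉ Ioi 1 := notMem_Ioi.mpr hx1.le
    simp only [f_modif, Pi.add_apply, indicator_of_notMem hx1',
      indicator_of_mem (mem_Ioo.mpr ⟨hx, hx1⟩),
      indicator_of_mem (mem_Ioi.mpr (one_lt_inv₀ hx |>.mpr hx1)), hfeq, hpow, smul_sub]
  · have hx1' : x ∉ Ioo 0 1 := fun h ↦ (not_lt.mpr hx1) h.2
    have hx1'' : x⁻¹ ∉ Ioi 1 := notMem_Ioi.mpr (inv_le_one_of_one_le₀ hx1)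
    simp only [f_modif, Pi.add_apply, indicator_of_notMem hx1', indicator_of_notMem hx1'',
      smul_zero]

theorem Λ₀_eq_mellin_add_mellin (s : ℂ) :
    P.Λ₀ s = mellin ((Ioi 1).indicator (P.f · - P.f₀)) s +
      P.ε • mellin ((Ioi 1).indicator (P.g · - P.g₀)) (P.k - s) := by
  set G := (Ioi 1).indicator (P.g · - P.g₀)
  have hG : MellinConvergent (fun x : ℝ ↦ (P.ε * (x : ℂ) ^ (-(P.k : ℂ))) • G x⁻¹) s := by
    simp_rw [mul_smul]
    refine (MellinConvergent.cpow_smul.mpr ?_).const_smul P.ε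
    simp_rw [← Real.rpow_neg_one]
    rw [MellinConvergent.comp_rpow (by norm_num),
      show (s + -(P.k : ℂ)) / ((-1 : ℝ) : ℂ) = P.k - s by push_cast; ring]
    exact P.symm.mellinConvergent_indicator_Ioi_one_sub (P.k - s)
  calc P.Λ₀ s = mellin (fun x ↦ (Ioi 1).indicator (P.f · - P.f₀) x +
        (P.ε * (x : ℂ) ^ (-(P.k : ℂ))) • G x⁻¹) s :=
        setIntegral_congr_fun measurableSet_Ioi fun x hx ↦ by rw [P.f_modif_eqOn hx]
    _ = _ := by
      rw [(hasMellin_add (P.mellinConvergent_indicator_Ioi_one_sub s) hG).2]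
      simp_rw [mul_smul, mellin_const_smul, mellin_cpow_smul, mellin_comp_inv, neg_add,
        neg_neg, add_comm (-s)]
      rfl

end WeakFEPair

theorem mellin_ofReal (f : ℝ → ℝ) (u : ℝ) :
    mellin (fun t ↦ (f t : ℂ)) u = ↑(∫ t in Ioi 0, t ^ (u - 1) * f t) := by
  rw [mellin, ← integral_complex_ofReal]
  refine setIntegral_congr_fun measurableSet_Ioi fun t (ht : 0 < t) ↦ ?_
  rw [smul_eq_mul, ofReal_mul, ofReal_cpow ht.le, ofReal_sub, ofReal_one]

theorem MellinConvergent.integrableOn_ofReal {f : ℝ → ℝ} {u : ℝ}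
    (hf : MellinConvergent (fun t ↦ (f t : ℂ)) u) :
    IntegrableOn (fun t ↦ t ^ (u - 1) * f t) (Ioi 0) := by
  refine hf.re.congr ?_
  filter_upwards [ae_restrict_mem measurableSet_Ioi] with t (ht : 0 < t)
  rw [smul_eq_mul, ← ofReal_one, ← ofReal_sub, ← ofReal_cpow ht.le, ← ofReal_mul]
  rfl

namespace Real

theorem rpow_add_add_rpow_sub {t : ℝ} (ht : 0 < t) (c d : ℝ) :
    t ^ (c + d) + t ^ (c - d) = 2 * t ^ c * cosh (d * log t) := by
  simp only [rpow_def_of_pos ht, cosh_eq, mul_add, mul_sub, exp_add, exp_sub, exp_neg]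
  ring_nf

theorem rpow_add_add_rpow_sub_le {t : ℝ} (ht : 0 < t) (c : ℝ) {d e : ℝ} (hd : 0 ≤ d)
    (hde : d ≤ e) : t ^ (c + d) + t ^ (c - d) ≤ t ^ (c + e) + t ^ (c - e) := by
  simp only [rpow_add_add_rpow_sub ht]
  gcongr
  rw [cosh_le_cosh, abs_mul, abs_mul]
  gcongr

end Real

/-- `θ(t) - 1` on `(1, ∞)`, where `evenKernel 0 t = θ(t) = ∑_{n ∈ ℤ} exp(-π n² t)`. -/
noncomputable def thetaTail : ℝ → ℝ := (Ioi 1).indicator fun t ↦ evenKernel 0 t - 1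

theorem thetaTail_nonneg (t : ℝ) : 0 ≤ thetaTail t := by
  refine indicator_nonneg (fun t (ht : 1 < t) ↦ ?_) t
  have := hasSum_int_evenKernel₀ 0 (zero_lt_one.trans ht)
  simp only [QuotientAddGroup.mk_zero, if_true] at this
  exact this.nonneg fun n ↦ by split_ifs <;> positivity

theorem hurwitzEvenFEPair_zero_indicator_sub :
    (Ioi 1).indicator (fun t ↦ (hurwitzEvenFEPair 0).f t - (hurwitzEvenFEPair 0).f₀) =
      fun t ↦ (thetaTail t : ℂ) := by
  ext t
  simp only [thetaTail, indicator_apply, hurwitzEvenFEPair]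
  split_ifs <;> simp

theorem mellinConvergent_thetaTail (s : ℂ) : MellinConvergent (fun t ↦ (thetaTail t : ℂ)) s :=
  hurwitzEvenFEPair_zero_indicator_sub ▸
    (hurwitzEvenFEPair 0).mellinConvergent_indicator_Ioi_one_sub s

theorem completedRiemannZeta₀_eq_mellin (s : ℂ) :
    completedRiemannZeta₀ s = (mellin (fun t ↦ (thetaTail t : ℂ)) (s / 2) +
      mellin (fun t ↦ (thetaTail t : ℂ)) ((1 - s) / 2)) / 2 := by
  have hG : (Ioi 1).indicator (fun t ↦ (hurwitzEvenFEPair 0).g t - (hurwitzEvenFEPair 0).g₀) =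
      fun t ↦ (thetaTail t : ℂ) := by
    change (Ioi 1).indicator (fun t ↦ (hurwitzEvenFEPair 0).symm.f t -
      (hurwitzEvenFEPair 0).symm.f₀) = _
    rw [hurwitzEvenFEPair_zero_symm, hurwitzEvenFEPair_zero_indicator_sub]
  have hε : (hurwitzEvenFEPair 0).ε = 1 := rfl
  have hk : (hurwitzEvenFEPair 0).k = 1 / 2 := rfl
  rw [completedRiemannZeta₀, completedHurwitzZetaEven₀, WeakFEPair.Λ₀_eq_mellin_add_mellin,
    hurwitzEvenFEPair_zero_indicator_sub, hG, hε, hk, one_smul]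
  push_cast
  ring_nf

theorem completedRiemannZeta₀_ofReal (x : ℝ) :
    completedRiemannZeta₀ x = ↑(((∫ t in Ioi 0, t ^ (x / 2 - 1) * thetaTail t) +
      ∫ t in Ioi 0, t ^ ((1 - x) / 2 - 1) * thetaTail t) / 2) := by
  rw [completedRiemannZeta₀_eq_mellin, show (x : ℂ) / 2 = ↑(x / 2) by push_cast; rfl,
    show (1 - (x : ℂ)) / 2 = ↑((1 - x) / 2) by push_cast; rfl, mellin_ofReal, mellin_ofReal,
    ofReal_div, ofReal_add, ofReal_ofNat]

theorem integrableOn_rpow_mul_thetaTail (u : ℝ) :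
    IntegrableOn (fun t ↦ t ^ (u - 1) * thetaTail t) (Ioi 0) :=
  (mellinConvergent_thetaTail u).integrableOn_ofReal

theorem ofReal_re_completedRiemannZeta₀ (x : ℝ) :
    ((completedRiemannZeta₀ x).re : ℂ) = completedRiemannZeta₀ x := by
  rw [completedRiemannZeta₀_ofReal, ofReal_re]

theorem re_completedRiemannZeta₀_nonneg (x : ℝ) : 0 ≤ (completedRiemannZeta₀ x).re := by
  rw [completedRiemannZeta₀_ofReal, ofReal_re]
  have (u : ℝ) : 0 ≤ ∫ t in Ioi 0, t ^ (u - 1) * thetaTail t :=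
    setIntegral_nonneg measurableSet_Ioi fun t (ht : 0 < t) ↦
      mul_nonneg (Real.rpow_nonneg ht.le _) (thetaTail_nonneg t)
  exact div_nonneg (add_nonneg (this _) (this _)) zero_le_two

theorem monotoneOn_re_completedRiemannZeta₀ :
    MonotoneOn (fun x : ℝ ↦ (completedRiemannZeta₀ x).re) (Ici (1 / 2)) := by
  intro a (ha : 1 / 2 ≤ a) b _ hab
  simp only [completedRiemannZeta₀_ofReal, ofReal_re]
  gcongr ?_ / 2
  have hint (x : ℝ) : IntegrableOn
      (fun t ↦ t ^ (x / 2 - 1) * thetaTail t + t ^ ((1 - x) / 2 - 1) * thetaTail t) (Ioi 0) :=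
    (integrableOn_rpow_mul_thetaTail _).add (integrableOn_rpow_mul_thetaTail _)
  rw [← integral_add (integrableOn_rpow_mul_thetaTail _) (integrableOn_rpow_mul_thetaTail _),
    ← integral_add (integrableOn_rpow_mul_thetaTail _) (integrableOn_rpow_mul_thetaTail _)]
  refine setIntegral_mono_on (hint a) (hint b) measurableSet_Ioi fun t (ht : 0 < t) ↦ ?_
  simp only [← add_mul]
  gcongr ?_ * _
  · exact thetaTail_nonneg t
  have hexp (x : ℝ) : t ^ (x / 2 - 1) + t ^ ((1 - x) / 2 - 1) =
      t ^ (-3 / 4 + (x / 2 - 1 / 4)) + t ^ (-3 / 4 - (x / 2 - 1 / 4)) := by ring_nf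
  rw [hexp, hexp]
  exact Real.rpow_add_add_rpow_sub_le ht _ (by linarith) (by linarith)

theorem Complex.ne_neg_natCast_of_re_pos {s : ℂ} (hs : 0 < s.re) (m : ℕ) : s ≠ -m := by
  rintro rfl
  simp at hs
  linarith [(Nat.cast_nonneg m : (0 : ℝ) ≤ m)]

theorem Complex.digamma_ofReal {x : ℝ} (hx : 0 < x) :
    digamma x = ↑(deriv Real.Gamma x / Real.Gamma x) := by
  have hx' := ne_neg_natCast_of_re_pos (s := x) hx
  have hderiv : deriv Gamma x = ↑(deriv Real.Gamma x) :=
    ((differentiableAt_Gamma _ hx').hasDerivAt.comp_ofReal.congr_of_eventuallyEq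
      (.of_eq (funext fun y ↦ (Gamma_ofReal y).symm))).unique
      (Real.differentiableAt_Gamma fun m ↦ by exact_mod_cast hx' m).hasDerivAt.ofReal_comp
  rw [digamma_def, logDeriv_apply, hderiv, Gamma_ofReal, ofReal_div]

theorem Real.deriv_Gamma_div_Gamma_add_one {x : ℝ} (hx : 0 < x) :
    deriv Gamma (x + 1) / Gamma (x + 1) = deriv Gamma x / Gamma x + 1 / x := by
  have h := digamma_apply_add_one x (ne_neg_natCast_of_re_pos (s := x) hx)
  rw [← ofReal_one, ← ofReal_add, digamma_ofReal (by linarith), digamma_ofReal hx] at h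
  rw [one_div]
  exact_mod_cast h

theorem hasDerivAt_Gammaℝ {s : ℂ} (hs : 0 < s.re) :
    HasDerivAt Gammaℝ (Gammaℝ s * (-Real.log π / 2 + digamma (s / 2) / 2)) s := by
  have hs2 := ne_neg_natCast_of_re_pos (s := s / 2) (by simpa using hs)
  have hpow : HasDerivAt (fun z : ℂ ↦ (π : ℂ) ^ (-z / 2))
      ((π : ℂ) ^ (-s / 2) * log π * (-1 / 2)) s :=
    ((hasDerivAt_id s).neg.div_const 2).const_cpow (Or.inl (ofReal_ne_zero.mpr Real.pi_ne_zero))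
  have hGamma : HasDerivAt (fun z ↦ Gamma (z / 2)) (deriv Gamma (s / 2) * (1 / 2)) s :=
    (differentiableAt_Gamma _ hs2).hasDerivAt.comp s ((hasDerivAt_id s).div_const 2)
  refine (hpow.mul hGamma).congr_deriv ?_
  rw [Gammaℝ_def, digamma_def, logDeriv_apply, ← ofReal_log Real.pi_pos.le]
  field_simp [Gamma_ne_zero hs2]

noncomputable def riemannXi (s : ℂ) : ℂ := s * (s - 1) / 2 * completedRiemannZeta s

theorem riemannXi_ofReal {x : ℝ} (hx : 1 < x) :
    riemannXi x = ↑(x * (x - 1) / 2 * (completedRiemannZeta₀ x).re + 1 / 2) := by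
  have hx0 : (x : ℂ) ≠ 0 := ofReal_ne_zero.mpr (by linarith)
  have hx1 : 1 - (x : ℂ) ≠ 0 := sub_ne_zero.mpr (by exact_mod_cast hx.ne)
  conv_lhs => rw [riemannXi, completedRiemannZeta_eq, ← ofReal_re_completedRiemannZeta₀]
  push_cast
  field_simp
  ring

theorem monotoneOn_re_riemannXi : MonotoneOn (fun x : ℝ ↦ (riemannXi x).re) (Ioi 1) := by
  intro a (ha : 1 < a) b (hb : 1 < b) hab
  simp only [riemannXi_ofReal ha, riemannXi_ofReal hb, ofReal_re]
  have hΛ₀ := monotoneOn_re_completedRiemannZeta₀ (by simp; linarith : a ∈ Ici (1 / 2))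
    (by simp; linarith : b ∈ Ici (1 / 2)) hab
  gcongr ?_ * ?_ + _
  · exact re_completedRiemannZeta₀_nonneg a
  · nlinarith

theorem re_logDeriv_riemannXi_nonneg {x : ℝ} (hx : 1 < x) : 0 ≤ (logDeriv riemannXi x).re := by
  have hdiff : DifferentiableAt ℂ riemannXi x :=
    (by fun_prop : DifferentiableAt ℂ (fun s : ℂ ↦ s * (s - 1) / 2) x).mul
      (differentiableAt_completedZeta (ofReal_ne_zero.mpr (by linarith))
        (by exact_mod_cast hx.ne'))
  have hacc : AccPt x (𝓟 (Ioi x)) := by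
    rw [accPt_principal_iff_nhdsWithin, sdiff_singleton_eq_self (self_notMem_Ioi (a := x))]
    infer_instance
  have hderiv : 0 ≤ (deriv riemannXi x).re :=
    hdiff.hasDerivAt.real_of_complex.hasDerivWithinAt.nonneg_of_monotoneOn hacc
      (monotoneOn_re_riemannXi.mono (Ioi_subset_Ioi hx.le))
  rw [logDeriv_apply, riemannXi_ofReal hx, div_ofReal_re]
  have := re_completedRiemannZeta₀_nonneg x
  have : 0 ≤ x * (x - 1) / 2 := by nlinarith
  positivity

theorem logDeriv_riemannXi {s : ℂ} (hs : 1 < s.re) :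
    logDeriv riemannXi s =
      1 / s + 1 / (s - 1) + (-Real.log π / 2 + digamma (s / 2) / 2) + logDeriv riemannZeta s := by
  have hs0 : 0 < s.re := by linarith
  have hs0' : s ≠ 0 := ne_zero_of_re_pos hs0
  have hs1 : s - 1 ≠ 0 := sub_ne_zero.mpr fun h ↦ by simp [h] at hs
  have heq : riemannXi =ᶠ[𝓝 s] fun z ↦ z * (z - 1) / 2 * Gammaℝ z * riemannZeta z := by
    filter_upwards [(isOpen_lt continuous_const continuous_re).mem_nhds hs0] with z (hz : 0 < z.re)
    rw [riemannXi, mul_assoc, riemannZeta_def_of_ne_zero (ne_zero_of_re_pos hz),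
      mul_div_cancel₀ _ (Gammaℝ_ne_zero_of_re_pos hz)]
  have hQ : HasDerivAt (fun z : ℂ ↦ z * (z - 1) / 2) ((1 * (s - 1) + s * 1) / 2) s :=
    ((hasDerivAt_id s).mul ((hasDerivAt_id s).sub_const 1)).div_const 2
  have hΓ := hasDerivAt_Gammaℝ hs0
  have hΓ0 := Gammaℝ_ne_zero_of_re_pos hs0
  rw [(logDeriv_congr_nhds heq).self_of_nhds,
    logDeriv_mul (f := fun z ↦ z * (z - 1) / 2 * Gammaℝ z) s (by simp [*])
      (riemannZeta_ne_zero_of_one_lt_re hs) (hQ.differentiableAt.mul hΓ.differentiableAt)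
      (differentiableAt_riemannZeta (by simpa [sub_eq_zero] using hs1)),
    logDeriv_mul (f := fun z : ℂ ↦ z * (z - 1) / 2) s (by simp [*]) hΓ0 hQ.differentiableAt
      hΓ.differentiableAt,
    logDeriv_apply, hQ.deriv, logDeriv_apply Gammaℝ, hΓ.deriv, mul_div_cancel_left₀ _ hΓ0]
  field_simp

theorem Real.log_four_mul_pi_lt : log (4 * π) < eulerMascheroniConstant + 2 := by
  have hγ := eulerMascheroniSeq_lt_eulerMascheroniConstant 31
  have hH : (4.0272 : ℝ) ≤ harmonic 31 := by norm_num [harmonic]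
  have hlog32 : log ((31 : ℕ) + 1 : ℝ) = 5 * log 2 := by
    rw [show ((31 : ℕ) + 1 : ℝ) = 2 ^ 5 by norm_num, log_pow]
    norm_num
  have hπ : log π ≤ 2 * log 2 + (π / 4 - 1) := by
    have := log_le_sub_one_of_pos (by positivity : 0 < π / 4)
    rw [log_div pi_ne_zero (by norm_num), show (4 : ℝ) = 2 ^ 2 by norm_num, log_pow] at this
    push_cast at this
    linarith
  rw [eulerMascheroniSeq, hlog32] at hγ
  rw [log_mul (by norm_num) pi_ne_zero, show (4 : ℝ) = 2 ^ 2 by norm_num, log_pow]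
  push_cast
  linarith [log_two_lt_d9, pi_lt_d4]

theorem stmt15 (r : ℝ) (hr : r > 0) :
    -((deriv riemannZeta (1 + (r : ℂ)) / riemannZeta (1 + (r : ℂ))).re) ≤
      1 / r - Real.log (2 * π) + Real.eulerMascheroniConstant / 2 + 1 +
        (1 / 2) * (deriv Real.Gamma ((3 + r) / 2) / Real.Gamma ((3 + r) / 2)) := by
  obtain ⟨σ, hσ⟩ : ∃ σ, σ = 1 + r := ⟨_, rfl⟩
  have hσ1 : 1 < σ := by linarith
  have hxi := re_logDeriv_riemannXi_nonneg hσ1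
  rw [logDeriv_riemannXi (by simpa using hσ1), show (σ : ℂ) - 1 = r by push_cast [hσ]; ring,
    show (σ : ℂ) / 2 = ↑(σ / 2) by push_cast; rfl, digamma_ofReal (by positivity)] at hxi
  norm_cast at hxi
  rw [add_re, ofReal_re] at hxi
  have hψ := Real.deriv_Gamma_div_Gamma_add_one (x := σ / 2) (by positivity)
  rw [show σ / 2 + 1 = (3 + r) / 2 by rw [hσ]; ring, one_div_div] at hψ
  have hlog : Real.log (4 * π) + Real.log π = 2 * Real.log (2 * π) := by
    rw [← Real.log_mul (by positivity) (by positivity), show 4 * π * π = (2 * π) ^ 2 by ring,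
      Real.log_pow, Nat.cast_ofNat]
  rw [← logDeriv_apply, show 1 + (r : ℂ) = σ by push_cast [hσ]; rfl, hψ]
  linarith [Real.log_four_mul_pi_lt, show 2 / σ = 2 * (1 / σ) by ring]
end
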